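/- Feasibility criterion: the system max_j T*(a_{ij}, x_j) = b_i (i = 1..m) has a solution x ∈ [0,1]^n if and only if X̄ defined by X̄_j = min_i x̂_i(j) is a solution, where x̂_i is the maximum solution of the i-th equation; moreover X̄ is then the maximum solution of the system. -/
import Mathlib

noncomputable def aczelAlsinaStar (lam a x : ℝ) : ℝ :=
  if a = 0 ∨ x = 0 then 0
  else Real.exp (-(((-Real.log a) ^ lam + (-Real.log x) ^ lam) ^ (1/lam)))

/-- Maximum solution of the i-th single equation, componentwise. -/
noncomputable def maxSol (lam b a : ℝ) : ℝ :=
  if b < a then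
    (if b = 0 then 0
     else Real.exp (-(((-Real.log b) ^ lam - (-Real.log a) ^ lam) ^ (1/lam))))
  else 1

private lemma rpow_invc {lam s : ℝ} (hlam : 0 < lam) (hs : 0 ≤ s) :
    (s ^ (1/lam)) ^ lam = s := by
  rw [← Real.rpow_mul hs, one_div, inv_mul_cancel₀ hlam.ne', Real.rpow_one]

private lemma rpow_cinv {lam s : ℝ} (hlam : 0 < lam) (hs : 0 ≤ s) :
    (s ^ lam) ^ (1/lam) = s := by
  rw [← Real.rpow_mul hs, mul_one_div, div_self hlam.ne', Real.rpow_one]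

private lemma T_nonneg (lam a x : ℝ) : 0 ≤ aczelAlsinaStar lam a x := by
  unfold aczelAlsinaStar
  split
  · exact le_refl _
  · exact (Real.exp_pos _).le

private lemma T_mono {lam a x y : ℝ} (hlam : 0 < lam) (ha0 : 0 ≤ a) (ha1 : a ≤ 1)
    (hx : 0 ≤ x) (hxy : x ≤ y) (hy : y ≤ 1) :
    aczelAlsinaStar lam a x ≤ aczelAlsinaStar lam a y := by
  by_cases ha : a = 0
  · simp [aczelAlsinaStar, ha]
  by_cases hx0 : x = 0
  · simp only [aczelAlsinaStar, hx0, or_true, if_pos]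
    exact T_nonneg lam a y
  have hxpos : 0 < x := lt_of_le_of_ne hx (Ne.symm hx0)
  have hypos : 0 < y := lt_of_lt_of_le hxpos hxy
  rw [aczelAlsinaStar, aczelAlsinaStar, if_neg (by push_neg; exact ⟨ha, hx0⟩),
    if_neg (by push_neg; exact ⟨ha, hypos.ne'⟩)]
  apply Real.exp_le_exp.mpr
  apply neg_le_neg
  have hly : 0 ≤ -Real.log y := by
    simpa using Real.log_nonpos hypos.le hy
  have hlxy : -Real.log y ≤ -Real.log x :=
    neg_le_neg (Real.log_le_log hxpos hxy)
  have h1 : (-Real.log y) ^ lam ≤ (-Real.log x) ^ lam :=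
    Real.rpow_le_rpow hly hlxy hlam.le
  have hla : 0 ≤ (-Real.log a) ^ lam :=
    Real.rpow_nonneg (by simpa using Real.log_nonpos ha0 ha1) lam
  apply Real.rpow_le_rpow (by positivity) (by linarith) (by positivity)

private lemma maxSol_mem {lam a b : ℝ} (hlam : 0 < lam) (ha : a ∈ Set.Icc (0:ℝ) 1)
    (hb : b ∈ Set.Icc (0:ℝ) 1) : maxSol lam b a ∈ Set.Icc (0:ℝ) 1 := by
  unfold maxSol
  split
  · split
    · exact ⟨le_refl _, zero_le_one⟩
    · rename_i hba hb0
      have hbpos : 0 < b := lt_of_le_of_ne hb.1 (Ne.symm hb0)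
      have hla : 0 ≤ -Real.log a := by simpa using Real.log_nonpos ha.1 ha.2
      have hlab : -Real.log a ≤ -Real.log b :=
        neg_le_neg (Real.log_le_log hbpos hba.le)
      have hdiff : 0 ≤ (-Real.log b) ^ lam - (-Real.log a) ^ lam := by
        have := Real.rpow_le_rpow hla hlab hlam.le
        linarith
      refine ⟨(Real.exp_pos _).le, Real.exp_le_one_iff.mpr ?_⟩
      simpa using Real.rpow_nonneg hdiff (1/lam)
  · exact ⟨zero_le_one, le_refl _⟩

/-- T(a, maxSol b a) ≤ b. -/
private lemma T_maxSol_le {lam a b : ℝ} (hlam : 0 < lam) (ha : a ∈ Set.Icc (0:ℝ) 1)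
    (hb : b ∈ Set.Icc (0:ℝ) 1) :
    aczelAlsinaStar lam a (maxSol lam b a) ≤ b := by
  unfold maxSol
  split
  · rename_i hba
    split
    · rename_i hb0
      simp [aczelAlsinaStar, hb0, hb.1]
    · rename_i hb0
      have hbpos : 0 < b := lt_of_le_of_ne hb.1 (Ne.symm hb0)
      have hapos : 0 < a := lt_trans hbpos hba
      have hla : 0 ≤ -Real.log a := by simpa using Real.log_nonpos ha.1 ha.2
      have hlb : 0 ≤ -Real.log b := by simpa using Real.log_nonpos hbpos.le hb.2
      have hlab : -Real.log a ≤ -Real.log b :=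
        neg_le_neg (Real.log_le_log hbpos hba.le)
      have hdiff : 0 ≤ (-Real.log b) ^ lam - (-Real.log a) ^ lam := by
        have := Real.rpow_le_rpow hla hlab hlam.le
        linarith
      rw [aczelAlsinaStar, if_neg (by push_neg; exact ⟨hapos.ne', (Real.exp_pos _).ne'⟩)]
      rw [Real.log_exp, neg_neg, rpow_invc hlam hdiff]
      have : (-Real.log a) ^ lam + ((-Real.log b) ^ lam - (-Real.log a) ^ lam)
          = (-Real.log b) ^ lam := by ring
      rw [this, rpow_cinv hlam hlb, neg_neg, Real.exp_log hbpos]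
  · rename_i hba
    push_neg at hba
    by_cases ha0 : a = 0
    · simpa [aczelAlsinaStar, ha0] using hb.1
    have hapos : 0 < a := lt_of_le_of_ne ha.1 (Ne.symm ha0)
    rw [aczelAlsinaStar, if_neg (by push_neg; exact ⟨ha0, one_ne_zero⟩)]
    rw [Real.log_one, neg_zero, Real.zero_rpow hlam.ne', add_zero,
      rpow_cinv hlam (by simpa using Real.log_nonpos ha.1 ha.2), neg_neg,
      Real.exp_log hapos]
    exact hba

/-- If T(a,x) ≤ b then x ≤ maxSol b a. -/
private lemma le_maxSol {lam a b x : ℝ} (hlam : 0 < lam) (ha : a ∈ Set.Icc (0:ℝ) 1)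
    (hb : b ∈ Set.Icc (0:ℝ) 1) (hx : x ∈ Set.Icc (0:ℝ) 1)
    (h : aczelAlsinaStar lam a x ≤ b) : x ≤ maxSol lam b a := by
  unfold maxSol
  split
  · rename_i hba
    have hapos : 0 < a := lt_of_le_of_lt hb.1 hba
    split
    · rename_i hb0
      subst hb0
      by_contra hcon
      push_neg at hcon
      have hxpos : 0 < x := hcon
      rw [aczelAlsinaStar, if_neg (by push_neg; exact ⟨hapos.ne', hxpos.ne'⟩)] at h
      exact absurd h (not_le.mpr (Real.exp_pos _))
    · rename_i hb0
      have hbpos : 0 < b := lt_of_le_of_ne hb.1 (Ne.symm hb0)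
      by_cases hx0 : x = 0
      · exact hx0 ▸ (Real.exp_pos _).le
      have hxpos : 0 < x := lt_of_le_of_ne hx.1 (Ne.symm hx0)
      rw [aczelAlsinaStar, if_neg (by push_neg; exact ⟨hapos.ne', hx0⟩)] at h
      have hla : 0 ≤ -Real.log a := by simpa using Real.log_nonpos ha.1 ha.2
      have hlb : 0 ≤ -Real.log b := by simpa using Real.log_nonpos hbpos.le hb.2
      have hlx : 0 ≤ -Real.log x := by simpa using Real.log_nonpos hxpos.le hx.2
      have hlab : -Real.log a ≤ -Real.log b :=
        neg_le_neg (Real.log_le_log hbpos hba.le)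
      have hdiff : 0 ≤ (-Real.log b) ^ lam - (-Real.log a) ^ lam := by
        have := Real.rpow_le_rpow hla hlab hlam.le
        linarith
      -- from h : exp(-E) ≤ b, get -log b ≤ E
      have hsum : 0 ≤ (-Real.log a) ^ lam + (-Real.log x) ^ lam := by
        have := Real.rpow_nonneg hla lam
        have := Real.rpow_nonneg hlx lam
        linarith
      have hE : -Real.log b ≤ ((-Real.log a) ^ lam + (-Real.log x) ^ lam) ^ (1/lam) := by
        have hlog := Real.log_le_log (Real.exp_pos _) h
        rw [Real.log_exp] at hlog
        linarith
      have hElam : (-Real.log b) ^ lam ≤ (-Real.log a) ^ lam + (-Real.log x) ^ lam := by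
        have := Real.rpow_le_rpow hlb hE hlam.le
        rwa [rpow_invc hlam hsum] at this
      have hc : ((-Real.log b) ^ lam - (-Real.log a) ^ lam) ^ (1/lam) ≤ -Real.log x := by
        by_contra hcon
        push_neg at hcon
        have := Real.rpow_lt_rpow hlx hcon hlam
        rw [rpow_invc hlam hdiff] at this
        linarith
      calc x = Real.exp (Real.log x) := (Real.exp_log hxpos).symm
        _ ≤ Real.exp (-(((-Real.log b) ^ lam - (-Real.log a) ^ lam) ^ (1/lam))) := by
            apply Real.exp_le_exp.mpr; linarith
  · exact hx.2

theorem feasibility_criterion (lam : ℝ) (hlam : 0 < lam) (m n : ℕ) (hm : 0 < m) (hn : 0 < n)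
    (A : Fin m → Fin n → ℝ) (hA : ∀ i j, A i j ∈ Set.Icc (0:ℝ) 1)
    (b : Fin m → ℝ) (hb : ∀ i, b i ∈ Set.Icc (0:ℝ) 1)
    (S : Set (Fin n → ℝ))
    (hS : S = {x : Fin n → ℝ | (∀ j, x j ∈ Set.Icc (0:ℝ) 1) ∧
      ∀ i, Finset.univ.sup' ⟨⟨0, hn⟩, Finset.mem_univ _⟩
        (fun j => aczelAlsinaStar lam (A i j) (x j)) = b i})
    (Xbar : Fin n → ℝ)
    (hXbar : Xbar = fun j => Finset.univ.inf' ⟨⟨0, hm⟩, Finset.mem_univ _⟩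
      (fun i => maxSol lam (b i) (A i j))) :
    (S.Nonempty ↔ Xbar ∈ S) ∧ ∀ x ∈ S, ∀ j, x j ≤ Xbar j := by
  subst hS hXbar
  have i0 : Fin m := ⟨0, hm⟩
  -- maximality
  have hmax : ∀ x ∈ {x : Fin n → ℝ | (∀ j, x j ∈ Set.Icc (0:ℝ) 1) ∧
      ∀ i, Finset.univ.sup' ⟨⟨0, hn⟩, Finset.mem_univ _⟩
        (fun j => aczelAlsinaStar lam (A i j) (x j)) = b i},
      ∀ j, x j ≤ Finset.univ.inf' ⟨⟨0, hm⟩, Finset.mem_univ _⟩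
        (fun i => maxSol lam (b i) (A i j)) := by
    rintro x ⟨hx01, hxeq⟩ j
    apply Finset.le_inf'
    intro i _
    apply le_maxSol hlam (hA i j) (hb i) (hx01 j)
    rw [← hxeq i]
    exact Finset.le_sup' (fun j => aczelAlsinaStar lam (A i j) (x j)) (Finset.mem_univ j)
  have hXbar01 : ∀ j, Finset.univ.inf' ⟨(⟨0, hm⟩ : Fin m), Finset.mem_univ _⟩
      (fun i => maxSol lam (b i) (A i j)) ∈ Set.Icc (0:ℝ) 1 := by
    intro j
    constructor
    · exact Finset.le_inf' _ _ (fun i _ => (maxSol_mem hlam (hA i j) (hb i)).1)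
    · exact le_trans (Finset.inf'_le _ (Finset.mem_univ i0))
        (maxSol_mem hlam (hA i0 j) (hb i0)).2
  refine ⟨⟨?_, fun h => ⟨_, h⟩⟩, hmax⟩
  rintro ⟨x, hx⟩
  refine ⟨hXbar01, fun i => le_antisymm ?_ ?_⟩
  · apply Finset.sup'_le
    intro j _
    refine le_trans (T_mono hlam (hA i j).1 (hA i j).2 (hXbar01 j).1
      (Finset.inf'_le (fun i => maxSol lam (b i) (A i j)) (Finset.mem_univ i))
      (maxSol_mem hlam (hA i j) (hb i)).2) (T_maxSol_le hlam (hA i j) (hb i))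
  · rw [← hx.2 i]
    apply Finset.sup'_le
    intro j _
    exact le_trans
      (T_mono hlam (hA i j).1 (hA i j).2 (hx.1 j).1 (hmax x hx j) (hXbar01 j).2)
      (Finset.le_sup' (fun j => aczelAlsinaStar lam (A i j)
        ((fun j => Finset.univ.inf' ⟨(⟨0, hm⟩ : Fin m), Finset.mem_univ _⟩
          (fun i => maxSol lam (b i) (A i j))) j)) (Finset.mem_univ j))
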